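/- Let A be the n×n tridiagonal discrete Laplacian (diagonal (1,2,...,2,1), off-diagonals −1) and S := (A + (1/n²)I_n)^{-1}. Then the entries of the last column of S are monotonically nondecreasing: S_{1,n} ≤ S_{2,n} ≤ ⋯ ≤ S_{n,n}. In particular S_{1,n} ≤ S_{i,n} ≤ S_{n,n} for all 1 ≤ i ≤ n. -/

import Mathlib

/-!
Write `v` for the last column of `S`, so `(A + ε I) v = e_n` with `ε = 1/n²`. Summing the first
`m + 1` rows telescopes the Laplacian part: `v_{m+1} - v_m = ε (v_0 + ⋯ + v_m)` for `m < n - 1`,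
and summing all rows gives `ε (v_0 + ⋯ + v_{n-1}) = 1`. By induction the partial sums have the
sign of `v_0`, so the total forces `v_0 > 0`; then all partial sums, hence all differences
`v_{m+1} - v_m`, are nonnegative.
-/

/-- The tridiagonal 1-D discrete Laplacian with diagonal (1,2,...,2,1) and off-diagonals -1. -/
def lap (n : ℕ) : Matrix (Fin n) (Fin n) ℝ :=
  Matrix.of fun i j =>
    if i = j then (if (i : ℕ) = 0 ∨ (i : ℕ) = n - 1 then 1 else 2)
    else if (i : ℕ) + 1 = (j : ℕ) ∨ (j : ℕ) + 1 = (i : ℕ) then -1 else 0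

/-- `S = (A + (1/n²) I)⁻¹`. -/
noncomputable def Smat (n : ℕ) : Matrix (Fin n) (Fin n) ℝ :=
  (lap n + ((1 : ℝ) / (n : ℝ)^2) • (1 : Matrix (Fin n) (Fin n) ℝ))⁻¹

open Matrix Finset

/-- For `n = 1` this fails: `lap 1 = !![1]` rather than the Neumann Laplacian `0`. -/
lemma lap_mulVec_apply {n : ℕ} (hn : 2 ≤ n) (u : ℕ → ℝ) (i : Fin n) :
    (lap n *ᵥ fun k => u k) i =
      (if 0 < (i : ℕ) then u i - u (i - 1) else 0) -
        (if (i : ℕ) + 1 < n then u (i + 1) - u i else 0) := by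
  let δ (a b : ℕ) : ℝ := if a = b then 1 else 0
  have hentry : ∀ k : Fin n, lap n i k =
      (if 0 < (i : ℕ) then δ k i - δ k (i - 1) else 0) -
        (if (i : ℕ) + 1 < n then δ k (i + 1) - δ k i else 0) := by
    intro k
    have := i.isLt; have := k.isLt
    simp only [δ, lap, Matrix.of_apply, Fin.ext_iff]
    split_ifs <;> first | omega | norm_num
  have hsum : ∀ m < n, ∑ k : Fin n, δ k m * u k = u m := fun m hm => by
    simp [δ, Fin.sum_univ_eq_sum_range (fun k => if k = m then u k else 0), hm]
  have := i.isLt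
  simp only [mulVec, dotProduct, hentry]
  split_ifs <;> simp (disch := omega) [sub_mul, sum_sub_distrib, hsum]

/-- `(lap n + ε • 1) *ᵥ (u ∘ Fin.val) = e_{n-1}`, read row by row through `lap_mulVec_apply`. -/
def SolvesLapAddSmulEqLast (n : ℕ) (ε : ℝ) (u : ℕ → ℝ) : Prop :=
  ∀ i < n, ε * u i + (if 0 < i then u i - u (i - 1) else 0) -
    (if i + 1 < n then u (i + 1) - u i else 0) = if i = n - 1 then 1 else 0

section PartialSums

variable {n : ℕ} {ε : ℝ} {u : ℕ → ℝ}

lemma SolvesLapAddSmulEqLast.sub_eq_mul_sum (hu : SolvesLapAddSmulEqLast n ε u) :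
    ∀ m, m + 1 < n → u (m + 1) - u m = ε * ∑ j ∈ range (m + 1), u j := by
  intro m hm
  induction m with
  | zero =>
    have h0 := hu 0 (by omega)
    rw [if_neg (lt_irrefl 0), if_pos hm, if_neg (by omega)] at h0
    rw [zero_add, sum_range_one]
    linarith
  | succ k ih =>
    have hk := hu (k + 1) (by omega)
    rw [if_pos k.succ_pos, if_pos hm, if_neg (by omega), Nat.add_sub_cancel] at hk
    rw [sum_range_succ]
    linarith [ih (by omega)]

lemma SolvesLapAddSmulEqLast.mul_sum_eq_one (hn : 2 ≤ n) (hu : SolvesLapAddSmulEqLast n ε u) :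
    ε * ∑ j ∈ range n, u j = 1 := by
  obtain ⟨p, rfl⟩ : ∃ p, n = p + 2 := ⟨n - 2, by omega⟩
  have hlast := hu (p + 1) (by omega)
  rw [if_pos (by omega), if_neg (by omega), if_pos (by omega), Nat.add_sub_cancel] at hlast
  rw [sum_range_succ]
  linarith [hu.sub_eq_mul_sum p (by omega)]

lemma sum_range_nonneg_of_sub_eq_mul_sum (hε : 0 ≤ ε)
    (hd : ∀ m, m + 1 < n → u (m + 1) - u m = ε * ∑ j ∈ range (m + 1), u j) (h0 : 0 ≤ u 0) :
    ∀ m < n, 0 ≤ ∑ j ∈ range (m + 1), u j := by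
  suffices h : ∀ m < n, 0 ≤ u m ∧ 0 ≤ ∑ j ∈ range (m + 1), u j from fun m hm => (h m hm).2
  intro m hm
  induction m with
  | zero => simpa using h0
  | succ k ih =>
    obtain ⟨huk, hsk⟩ := ih (by omega)
    have hk1 : 0 ≤ u (k + 1) := by linarith [hd k hm, mul_nonneg hε hsk]
    exact ⟨hk1, by rw [sum_range_succ]; positivity⟩

lemma SolvesLapAddSmulEqLast.apply_zero_nonneg (hn : 2 ≤ n) (hε : 0 < ε)
    (hu : SolvesLapAddSmulEqLast n ε u) : 0 ≤ u 0 := by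
  by_contra! h
  have hd : ∀ m, m + 1 < n → (-u) (m + 1) - (-u) m = ε * ∑ j ∈ range (m + 1), (-u) j :=
    fun m hm => by simp only [Pi.neg_apply, sum_neg_distrib]; linarith [hu.sub_eq_mul_sum m hm]
  have hneg := sum_range_nonneg_of_sub_eq_mul_sum hε.le hd (by simp [h.le]) (n - 1) (by omega)
  rw [Nat.sub_add_cancel (by omega)] at hneg
  simp only [Pi.neg_apply, sum_neg_distrib, neg_nonneg] at hneg
  linarith [hu.mul_sum_eq_one hn, mul_nonpos_of_nonneg_of_nonpos hε.le hneg]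

end PartialSums

lemma monotone_of_lap_add_smul_mulVec_eq_single {n : ℕ} (hn : 2 ≤ n) {ε : ℝ} (hε : 0 < ε)
    (x : Fin n → ℝ) (hx : (lap n + ε • 1) *ᵥ x = Pi.single ⟨n - 1, by omega⟩ 1) :
    Monotone x := by
  set u : ℕ → ℝ := fun m => if h : m < n then x ⟨m, h⟩ else 0
  have hxu : x = fun k : Fin n => u k := funext fun k => by simp [u]
  have hu : SolvesLapAddSmulEqLast n ε u := by
    intro i hi
    have hi' := congrFun hx ⟨i, hi⟩
    rw [hxu, add_mulVec, smul_mulVec, one_mulVec, Pi.add_apply, lap_mulVec_apply hn] at hi'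
    simp only [Pi.smul_apply, smul_eq_mul, Pi.single_apply, Fin.ext_iff] at hi'
    rw [← hi']
    ring
  have hsum :=
    sum_range_nonneg_of_sub_eq_mul_sum hε.le hu.sub_eq_mul_sum (hu.apply_zero_nonneg hn hε)
  obtain ⟨p, rfl⟩ : ∃ p, n = p + 1 := ⟨n - 1, by omega⟩
  refine Fin.monotone_iff_le_succ.2 fun i => ?_
  have hi := i.isLt
  rw [hxu]
  simp only [Fin.val_castSucc, Fin.val_succ]
  linarith [hu.sub_eq_mul_sum i (by omega), mul_nonneg hε.le (hsum i (by omega))]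

theorem Smat_last_column_monotone (n : ℕ) (hn : 1 ≤ n) :
    (∀ i j : Fin n, i ≤ j → Smat n i ⟨n - 1, by omega⟩ ≤ Smat n j ⟨n - 1, by omega⟩) ∧
    (∀ i : Fin n,
      Smat n ⟨0, by omega⟩ ⟨n - 1, by omega⟩ ≤ Smat n i ⟨n - 1, by omega⟩ ∧
      Smat n i ⟨n - 1, by omega⟩ ≤ Smat n ⟨n - 1, by omega⟩ ⟨n - 1, by omega⟩) := by
  have hmono : Monotone fun i : Fin n => Smat n i ⟨n - 1, by omega⟩ := by
    obtain rfl | hn2 : n = 1 ∨ 2 ≤ n := by omega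
    · exact Subsingleton.monotone _
    by_cases hB : IsUnit (lap n + ((1 : ℝ) / (n : ℝ) ^ 2) • (1 : Matrix (Fin n) (Fin n) ℝ)).det
    · have hε : (0 : ℝ) < 1 / (n : ℝ) ^ 2 := by
        have : (0 : ℝ) < n := by exact_mod_cast hn
        positivity
      refine monotone_of_lap_add_smul_mulVec_eq_single hn2 hε _ ?_
      rw [show (fun i => Smat n i ⟨n - 1, by omega⟩) = Smat n *ᵥ Pi.single ⟨n - 1, by omega⟩ 1
        from (mulVec_single_one _ _).symm, mulVec_mulVec, Smat, mul_nonsing_inv _ hB, one_mulVec]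
    -- a singular matrix has the junk inverse `0`
    · rw [show Smat n = 0 from nonsing_inv_apply_not_isUnit _ hB]
      exact monotone_const
  exact ⟨fun i j hij => hmono hij,
    fun i => ⟨hmono (Nat.zero_le _), hmono (Nat.le_sub_one_of_lt i.isLt)⟩⟩
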